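/- arXiv:2410.10297 — 2 statements merged into one kernel-verified Lean document; each statement's English description precedes it below -/
import Mathlib

section
/- Let V be a Hilbert space compactly embedded in a Hilbert space H, and let ω ↦ a_ω be a family of bounded sesquilinear forms on V, depending polynomially (specifically, quadratically) on ω ∈ ℂ, each satisfying a Gårding inequality with constants uniform on compact sets, and suppose there exists ω₀ ∈ ℂ for which a_{ω₀} is coercive (hence injective). Then the set {ω ∈ ℂ : ∃ u ∈ V, u ≠ 0, a_ω(u,v) = 0 ∀v ∈ V} is discrete in ℂ with no accumulation point. -/
/-!
By Riesz representation `a ω u v = ⟪v, A ω u⟫` with `A ω = A₀ + ω A₁ + ω² A₂` analytic in `ω`, and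
the Gårding inequality on a closed ball around `z` says that `A ω + C ι†ι` is coercive there.
Replacing the compact operator `C ι†ι` by a finite-rank approximation `P_W C ι†ι` with error
`< c / 2` keeps coercivity, so `B ω = A ω + P_W C ι†ι` is invertible near `z` (Lax–Milgram), and
`A ω = B ω - P_W C ι†ι` has a nontrivial kernel iff the analytic function
`ω ↦ det (1 - P_W C ι†ι (B ω)⁻¹)` on the finite-dimensional space `W` vanishes. Hence near every
point the resonant set is either a full neighbourhood or has an isolated point there; since `ℂ` is
connected, the first alternative would make every `ω` resonant, which coercivity at `ω₀` rules out.
-/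

open Filter Topology
open scoped InnerProductSpace ComplexConjugate

theorem not_accPt_of_eventually_mem_or_eventually_notMem {X : Type*} [TopologicalSpace X]
    [PreconnectedSpace X] {S : Set X} {x₀ : X} (hx₀ : x₀ ∉ S)
    (h : ∀ z, (∀ᶠ w in 𝓝 z, w ∈ S) ∨ ∀ᶠ w in 𝓝[≠] z, w ∉ S) (z : X) :
    ¬ AccPt z (𝓟 S) := by
  set U := {z | ∀ᶠ w in 𝓝 z, w ∈ S}
  have hUS : U ⊆ S := fun _ hw => hw.self_of_nhds
  have hUc : IsOpen Uᶜ := by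
    refine isOpen_iff_mem_nhds.mpr fun z hz => ?_
    filter_upwards [eventually_nhdsWithin_iff.mp ((h z).resolve_left hz)] with w hw
    rcases eq_or_ne w z with rfl | hwz
    · exact hz
    · exact fun hwU => hw hwz (hUS hwU)
  have hU : U = ∅ :=
    (isClopen_iff.mp ⟨isOpen_compl_iff.mp hUc, isOpen_setOfPred_eventually_nhds⟩).resolve_right
      fun hU => hx₀ (hUS (hU ▸ Set.mem_univ x₀))
  rw [accPt_iff_frequently_nhdsNE, not_frequently]
  exact (h z).resolve_left fun hz => (hU ▸ hz : z ∈ (∅ : Set X))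

theorem AnalyticAt.eventually_or_eventually_not_of_iff {𝕜 E : Type*} [NontriviallyNormedField 𝕜]
    [NormedAddCommGroup E] [NormedSpace 𝕜 E] {d : 𝕜 → E} {z : 𝕜} {p : 𝕜 → Prop}
    (hd : AnalyticAt 𝕜 d z) (hp : ∀ᶠ w in 𝓝 z, p w ↔ d w = 0) :
    (∀ᶠ w in 𝓝 z, p w) ∨ ∀ᶠ w in 𝓝[≠] z, ¬ p w := by
  rcases hd.eventually_eq_zero_or_eventually_ne_zero with h | h
  · left
    filter_upwards [hp, h] with w hpw hw using hpw.mpr hw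
  · right
    filter_upwards [nhdsWithin_le_nhds hp, h] with w hpw hw using fun hw' => hw (hpw.mp hw')

theorem ContinuousLinearMap.analyticAt_det {𝕜 E : Type*} [NontriviallyNormedField 𝕜]
    [CompleteSpace 𝕜] [NormedAddCommGroup E] [NormedSpace 𝕜 E] [FiniteDimensional 𝕜 E]
    (f : E →L[𝕜] E) : AnalyticAt 𝕜 (fun g : E →L[𝕜] E => g.det) f := by
  classical
  let b := Module.finBasis 𝕜 E
  have hentry (i j) : AnalyticAt 𝕜 (fun g : E →L[𝕜] E => LinearMap.toMatrix b b g i j) f :=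
    (LinearMap.toContinuousLinearMap (Matrix.entryLinearMap 𝕜 𝕜 i j ∘ₗ
      (LinearMap.toMatrix b b).toLinearMap ∘ₗ ContinuousLinearMap.coeLM 𝕜)).analyticAt f
  simp_rw [ContinuousLinearMap.det, ← LinearMap.det_toMatrix b, Matrix.det_apply,
    Units.smul_def, zsmul_eq_mul]
  exact Finset.analyticAt_fun_sum _ fun σ _ =>
    analyticAt_const.mul (Finset.analyticAt_fun_prod _ fun i _ => hentry (σ i) i)

section FiniteRank

variable {𝕜 E : Type*} [NontriviallyNormedField 𝕜] [NormedAddCommGroup E] [NormedSpace 𝕜 E]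
  (W : Submodule 𝕜 E) [FiniteDimensional 𝕜 W] (T : E →L[𝕜] W)

-- `P - W.subtypeL ∘L T = (1 - W.subtypeL ∘L T ∘L P⁻¹) ∘L P`, and the kernel of the middle factor
-- consists of fixed points of an operator with range in `W`.
theorem exists_ne_zero_sub_subtypeL_comp_eq_zero_iff {P : E →L[𝕜] E} (hP : IsUnit P) :
    (∃ u ≠ 0, (P - W.subtypeL ∘L T) u = 0) ↔
      (1 - T ∘L Ring.inverse P ∘L W.subtypeL).det = 0 := by
  set Q := Ring.inverse P
  have hQP (x : E) : Q (P x) = x := by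
    simpa using congrArg (· x) (Ring.inverse_mul_cancel P hP)
  have hPQ (x : E) : P (Q x) = x := by
    simpa using congrArg (· x) (Ring.mul_inverse_cancel P hP)
  rw [ContinuousLinearMap.det, LinearMap.det_eq_zero_iff_ker_ne_bot, Submodule.ne_bot_iff]
  constructor
  · rintro ⟨u, hu, hPu⟩
    have hPu' : P u = T u := sub_eq_zero.mp hPu
    refine ⟨T u, LinearMap.mem_ker.mpr ?_, fun hTu => hu ?_⟩
    · simp [← hPu', hQP]
    · rw [← hQP u, hPu', hTu, Submodule.coe_zero, map_zero]
  · rintro ⟨w, hw, hw0⟩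
    have hTQw : T (Q w) = w := (sub_eq_zero.mp (LinearMap.mem_ker.mp hw)).symm
    refine ⟨Q w, fun hQw => hw0 ?_, ?_⟩
    · simpa [hQw, eq_comm] using hPQ w
    · simp [hPQ, hTQw]

theorem analyticAt_det_one_sub_comp [CompleteSpace 𝕜] (Q : E →L[𝕜] E) :
    AnalyticAt 𝕜 (fun Q : E →L[𝕜] E => (1 - T ∘L Q ∘L W.subtypeL).det) Q := by
  have hL : AnalyticAt 𝕜 (fun Q : E →L[𝕜] E => T ∘L Q ∘L W.subtypeL) Q :=
    ((ContinuousLinearMap.compL 𝕜 W E W T).comp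
      ((ContinuousLinearMap.compL 𝕜 W E E).flip W.subtypeL)).analyticAt Q
  exact (ContinuousLinearMap.analyticAt_det _).comp (analyticAt_const.sub hL)

end FiniteRank

section Hilbert

variable {𝕜 V : Type*} [RCLike 𝕜] [NormedAddCommGroup V] [InnerProductSpace 𝕜 V]

def IsBoundedSesqForm (b : V → V → 𝕜) : Prop :=
  (∀ (c : 𝕜) (x y v : V), b (c • x + y) v = c * b x v + b y v) ∧
  (∀ (c : 𝕜) (v x y : V), b v (c • x + y) = (starRingEnd 𝕜) c * b v x + b v y) ∧
  (∃ M : ℝ, ∀ u v, ‖b u v‖ ≤ M * ‖u‖ * ‖v‖)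

theorem IsBoundedSesqForm.exists_clm [CompleteSpace V] {b : V → V → 𝕜}
    (hb : IsBoundedSesqForm b) : ∃ A : V →L[𝕜] V, ∀ u v, b u v = ⟪v, A u⟫_𝕜 := by
  obtain ⟨hl, hr, M, hM⟩ := hb
  have hl0 (v : V) : b 0 v = 0 := by simpa using hl 1 0 0 v
  have hr0 (v : V) : b v 0 = 0 := by simpa using hr 1 v 0 0
  let B : V →ₗ⋆[𝕜] V →ₗ[𝕜] 𝕜 := LinearMap.mk₂'ₛₗ _ _ (fun u v => conj (b u v))
    (fun x y v => by simpa using congrArg conj (hl 1 x y v))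
    (fun c x v => by simpa [hl0] using congrArg conj (hl c x 0 v))
    (fun v x y => by simpa using congrArg conj (hr 1 v x y))
    (fun c v x => by simpa [hr0] using congrArg conj (hr c v x 0))
  refine ⟨InnerProductSpace.continuousLinearMapOfBilin
    (B.mkContinuous₂ M fun u v => by simpa [B] using hM u v), fun u v => ?_⟩
  rw [← inner_conj_symm, InnerProductSpace.continuousLinearMapOfBilin_apply]
  simp [B]

theorem forall_inner_eq_zero_iff {x : V} : (∀ v, ⟪v, x⟫_𝕜 = 0) ↔ x = 0 :=
  ⟨fun h => inner_self_eq_zero.mp (h x), fun h v => by rw [h, inner_zero_right]⟩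

theorem exists_analytic_clm_of_quadratic [CompleteSpace V] {a : 𝕜 → V → V → 𝕜}
    {a0 a1 a2 : V → V → 𝕜} (h0 : IsBoundedSesqForm a0) (h1 : IsBoundedSesqForm a1)
    (h2 : IsBoundedSesqForm a2)
    (hquad : ∀ ω u v, a ω u v = a0 u v + ω * a1 u v + ω ^ 2 * a2 u v) :
    ∃ A : 𝕜 → V →L[𝕜] V, (∀ ω, AnalyticAt 𝕜 A ω) ∧ ∀ ω u v, a ω u v = ⟪v, A ω u⟫_𝕜 := by
  obtain ⟨A₀, hA₀⟩ := h0.exists_clm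
  obtain ⟨A₁, hA₁⟩ := h1.exists_clm
  obtain ⟨A₂, hA₂⟩ := h2.exists_clm
  refine ⟨fun ω => A₀ + ω • A₁ + ω ^ 2 • A₂, fun ω => by fun_prop, fun ω u v => ?_⟩
  simp [hquad, hA₀, hA₁, hA₂, inner_add_right, inner_smul_right]

theorem le_re_inner_of_norm_sub_le {B B' : V →L[𝕜] V} {c δ : ℝ}
    (hB : ∀ u, c * ‖u‖ ^ 2 ≤ RCLike.re ⟪u, B u⟫_𝕜) (hBB' : ‖B - B'‖ ≤ δ) (u : V) :
    (c - δ) * ‖u‖ ^ 2 ≤ RCLike.re ⟪u, B' u⟫_𝕜 := by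
  have hdiff : RCLike.re ⟪u, (B - B') u⟫_𝕜 ≤ δ * ‖u‖ ^ 2 :=
    calc RCLike.re ⟪u, (B - B') u⟫_𝕜 ≤ ‖u‖ * ‖(B - B') u‖ :=
          (RCLike.re_le_norm _).trans (norm_inner_le_norm _ _)
      _ ≤ ‖u‖ * (δ * ‖u‖) := by
          gcongr
          exact ((B - B').le_opNorm u).trans (by gcongr)
      _ = δ * ‖u‖ ^ 2 := by ring
  have := hB u
  simp only [sub_apply, inner_sub_right, map_sub] at hdiff
  linarith

theorem isUnit_of_coercive [CompleteSpace V] (B : V →L[𝕜] V) {c : ℝ} (hc : 0 < c)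
    (hB : ∀ u, c * ‖u‖ ^ 2 ≤ RCLike.re ⟪u, B u⟫_𝕜) : IsUnit B := by
  have hbelow (u : V) : c * ‖u‖ ≤ ‖B u‖ := by
    rcases eq_or_ne u 0 with rfl | hu
    · simp
    have : c * ‖u‖ ^ 2 ≤ ‖u‖ * ‖B u‖ :=
      (hB u).trans ((RCLike.re_le_norm _).trans (norm_inner_le_norm u (B u)))
    nlinarith [norm_pos_iff.mpr hu]
  have hanti : AntilipschitzWith ⟨c⁻¹, (inv_pos.mpr hc).le⟩ B :=
    B.antilipschitz_of_bound fun u => by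
      change ‖u‖ ≤ c⁻¹ * ‖B u‖
      rw [inv_mul_eq_div, le_div_iff₀ hc, mul_comm]
      exact hbelow u
  have hdense : B.rangeᗮ = ⊥ := by
    refine (Submodule.eq_bot_iff _).mpr fun v hv => ?_
    have hv0 : ⟪B v, v⟫_𝕜 = 0 := hv (B v) (LinearMap.mem_range_self _ v)
    have : c * ‖v‖ ^ 2 ≤ 0 := by simpa [← inner_conj_symm v, hv0] using hB v
    by_contra hv
    nlinarith [pow_pos (norm_pos_iff.mpr hv) 2]
  have hrange : B.range = ⊤ := by
    rw [← Submodule.topologicalClosure_eq_top_iff] at hdense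
    have hclosed : IsClosed (Set.range B) := hanti.isClosed_range B.uniformContinuous
    rwa [IsClosed.submodule_topologicalClosure_eq (by rwa [LinearMap.coe_range])] at hdense
  exact ContinuousLinearMap.isUnit_iff_bijective.mpr
    ⟨hanti.injective, LinearMap.range_eq_top.mp hrange⟩

theorem Submodule.norm_sub_starProjection_le {F : Type*} [NormedAddCommGroup F]
    [InnerProductSpace 𝕜 F] (W : Submodule 𝕜 F) [W.HasOrthogonalProjection] (x : F)
    {w : F} (hw : w ∈ W) : ‖x - W.starProjection x‖ ≤ ‖x - w‖ := by
  rw [Submodule.starProjection_minimal]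
  exact ciInf_le ⟨0, Set.forall_mem_range.mpr fun _ => norm_nonneg _⟩ (⟨w, hw⟩ : W)

theorem IsCompactOperator.exists_norm_sub_starProjection_comp_le {E F : Type*}
    [NormedAddCommGroup E] [NormedSpace 𝕜 E] [NormedAddCommGroup F] [InnerProductSpace 𝕜 F]
    {K : E →L[𝕜] F} (hK : IsCompactOperator K) {ε : ℝ} (hε : 0 < ε) :
    ∃ (W : Submodule 𝕜 F) (_ : FiniteDimensional 𝕜 W), ‖K - W.starProjection ∘L K‖ ≤ ε := by
  obtain ⟨t, -, ht, hcover⟩ :=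
    finite_cover_balls_of_compact (hK.isCompact_closure_image_closedBall 1) hε
  have : FiniteDimensional 𝕜 (Submodule.span 𝕜 t) := FiniteDimensional.span_of_finite 𝕜 ht
  refine ⟨_, this, ContinuousLinearMap.opNorm_le_of_unit_norm hε.le fun x hx => ?_⟩
  obtain ⟨y, hyt, hy⟩ := Set.mem_iUnion₂.mp (hcover (subset_closure ⟨x, by simp [hx], rfl⟩))
  calc ‖K x - (Submodule.span 𝕜 t).starProjection (K x)‖
      ≤ ‖K x - y‖ := Submodule.norm_sub_starProjection_le _ _ (Submodule.subset_span hyt)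
    _ ≤ ε := (mem_ball_iff_norm.mp hy).le

theorem eventually_or_eventually_not_of_coercive_add_compact [CompleteSpace V]
    {A : 𝕜 → V →L[𝕜] V} {z : 𝕜} (hA : AnalyticAt 𝕜 A z) {K : V →L[𝕜] V}
    (hK : IsCompactOperator K) {c : ℝ} (hc : 0 < c)
    (hcoer : ∀ᶠ ω in 𝓝 z, ∀ u, c * ‖u‖ ^ 2 ≤ RCLike.re ⟪u, (A ω + K) u⟫_𝕜) :
    (∀ᶠ ω in 𝓝 z, ∃ u ≠ 0, A ω u = 0) ∨ ∀ᶠ ω in 𝓝[≠] z, ¬ ∃ u ≠ 0, A ω u = 0 := by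
  obtain ⟨W, _, hW⟩ := hK.exists_norm_sub_starProjection_comp_le (half_pos hc)
  set T := W.orthogonalProjectionOnto ∘L K
  set B := fun ω => A ω + W.subtypeL ∘L T
  have hPT : W.subtypeL ∘L T = W.starProjection ∘L K := rfl
  have hB : ∀ᶠ ω in 𝓝 z, IsUnit (B ω) := hcoer.mono fun ω hω =>
    isUnit_of_coercive _ (half_pos hc) fun u => by
      have := le_re_inner_of_norm_sub_le hω (B' := B ω) (by simpa [B, hPT] using hW) u
      rwa [sub_half] at this
  have hd : AnalyticAt 𝕜 (fun ω => (1 - T ∘L Ring.inverse (B ω) ∘L W.subtypeL).det) z := by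
    have hinv := analyticAt_inverse (𝕜 := 𝕜) hB.self_of_nhds.unit
    rw [hB.self_of_nhds.unit_spec] at hinv
    exact (analyticAt_det_one_sub_comp W T _).comp (hinv.comp (hA.add analyticAt_const))
  refine hd.eventually_or_eventually_not_of_iff ?_
  filter_upwards [hB] with ω hω
  rw [← exists_ne_zero_sub_subtypeL_comp_eq_zero_iff W T hω, add_sub_cancel_right]

end Hilbert

theorem stmt_8_general {V H : Type*}
    [NormedAddCommGroup V] [InnerProductSpace ℂ V] [CompleteSpace V]
    [NormedAddCommGroup H] [InnerProductSpace ℂ H] [CompleteSpace H]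
    (ι : V →L[ℂ] H) (hcomp : IsCompactOperator ι)
    (a : ℂ → V → V → ℂ) (a0 a1 a2 : V → V → ℂ)
    (hquad : ∀ (ω : ℂ) (u v : V), a ω u v = a0 u v + ω * a1 u v + ω ^ 2 * a2 u v)
    (hlin : ∀ b ∈ ({a0, a1, a2} : Set (V → V → ℂ)),
      (∀ (c : ℂ) (x y v : V), b (c • x + y) v = c * b x v + b y v) ∧
      (∀ (c : ℂ) (v x y : V), b v (c • x + y) = (starRingEnd ℂ) c * b v x + b v y) ∧
      (∃ M : ℝ, ∀ u v, ‖b u v‖ ≤ M * ‖u‖ * ‖v‖))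
    (hG : ∀ Kset : Set ℂ, IsCompact Kset →
      ∃ c > (0:ℝ), ∃ C : ℝ, ∀ ω ∈ Kset, ∀ u : V,
        c * ‖u‖ ^ 2 - C * ‖ι u‖ ^ 2 ≤ (a ω u u).re)
    (hcoerc : ∃ ω₀ : ℂ, ∃ c0 > (0:ℝ), ∀ u : V, c0 * ‖u‖ ^ 2 ≤ (a ω₀ u u).re) :
    ∀ z : ℂ, ¬ AccPt z (Filter.principal {ω : ℂ | ∃ u : V, u ≠ 0 ∧ ∀ v : V, a ω u v = 0}) := by
  obtain ⟨A, hA_an, hA⟩ := exists_analytic_clm_of_quadratic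
    (hlin a0 (by simp)) (hlin a1 (by simp)) (hlin a2 (by simp)) hquad
  simp_rw [hA, forall_inner_eq_zero_iff]
  obtain ⟨ω₀, c₀, hc₀, hω₀⟩ := hcoerc
  refine not_accPt_of_eventually_mem_or_eventually_notMem (x₀ := ω₀) ?_ fun z => ?_
  · rintro ⟨u, hu, hAu⟩
    have hunit := isUnit_of_coercive (A ω₀) hc₀ fun u => by simpa [hA] using hω₀ u
    exact hu ((ContinuousLinearMap.isUnit_iff_bijective.mp hunit).1 (hAu.trans (map_zero _).symm))
  · obtain ⟨c, hc, C, hGz⟩ := hG _ (isCompact_closedBall z 1)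
    have hK : IsCompactOperator ((C : ℂ) • (ContinuousLinearMap.adjoint ι ∘L ι)) := by
      have := (hcomp.clm_comp (ContinuousLinearMap.adjoint ι)).smul (C : ℂ)
      rwa [← ContinuousLinearMap.coe_comp, ← FunLike.coe_smul] at this
    refine eventually_or_eventually_not_of_coercive_add_compact (hA_an z) hK hc ?_
    filter_upwards [Metric.closedBall_mem_nhds z one_pos] with ω hω u
    have hι := ι.apply_norm_sq_eq_inner_adjoint_right u
    simp only [add_apply, smul_apply, inner_add_right, inner_smul_right, map_add, ← hA,
      RCLike.re_to_complex, Complex.re_ofReal_mul] at hι ⊢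
    rw [← hι]
    linarith [hGz ω hω u]

/-- Discreteness of resonant quasi-frequencies (Theorem `discrete`): for a family of
bounded sesquilinear forms depending quadratically on `ω`, satisfying Gårding
inequalities with constants uniform on compact sets relative to a compact embedding,
and coercive at some `ω₀`, the set of `ω` admitting a nontrivial kernel element has
no accumulation point in `ℂ`. -/
theorem stmt_8 {V H : Type*}
    [NormedAddCommGroup V] [InnerProductSpace ℂ V] [CompleteSpace V]
    [NormedAddCommGroup H] [InnerProductSpace ℂ H] [CompleteSpace H]
    (ι : V →L[ℂ] H) (hcomp : IsCompactOperator ι) (hinj : Function.Injective ι)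
    (a : ℂ → V → V → ℂ) (a0 a1 a2 : V → V → ℂ)
    (hquad : ∀ (ω : ℂ) (u v : V), a ω u v = a0 u v + ω * a1 u v + ω ^ 2 * a2 u v)
    (hlin : ∀ b ∈ ({a0, a1, a2} : Set (V → V → ℂ)),
      (∀ (c : ℂ) (x y v : V), b (c • x + y) v = c * b x v + b y v) ∧
      (∀ (c : ℂ) (v x y : V), b v (c • x + y) = (starRingEnd ℂ) c * b v x + b v y) ∧
      (∃ M : ℝ, ∀ u v, ‖b u v‖ ≤ M * ‖u‖ * ‖v‖))
    (hG : ∀ Kset : Set ℂ, IsCompact Kset →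
      ∃ c > (0:ℝ), ∃ C : ℝ, ∀ ω ∈ Kset, ∀ u : V,
        c * ‖u‖ ^ 2 - C * ‖ι u‖ ^ 2 ≤ (a ω u u).re)
    (hcoerc : ∃ ω₀ : ℂ, ∃ c0 > (0:ℝ), ∀ u : V, c0 * ‖u‖ ^ 2 ≤ (a ω₀ u u).re) :
    ∀ z : ℂ, ¬ AccPt z (Filter.principal {ω : ℂ | ∃ u : V, u ≠ 0 ∧ ∀ v : V, a ω u v = 0}) :=
  stmt_8_general ι hcomp a a0 a1 a2 hquad hlin hG hcoerc
end

section
/- Let C_inv > 0, and suppose nonnegative reals a_n for −K ≤ n ≤ K satisfy Σ_{n=−K}^{K} (n⁴ − C·C_inv²·n²)·a_n² ≤ C·C_inv⁴ for a constant C > 0, together with Σ_n a_n² ≤ 1. Then there is a constant C' depending only on C such that for all 1 < |n| ≤ K one has a_n ≤ C'·C_inv²/n². -/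
/-!
Write `c = C·C_inv²`. Completing the square, `m⁴ - c m² ≥ -c²/4`, so since `∑ aₘ² ≤ 1` the
terms `m ≠ n` of the weighted sum contribute at least `-c²/4`, and the single term obeys
`(n⁴ - c n²) aₙ² ≤ (C + C²/4) C_inv⁴`. If `n² ≥ 2c` the weight is at least `n⁴/2`, giving
`aₙ n² ≤ (1 + 2C) C_inv²`; otherwise `aₙ ≤ 1 < 2c/n²` already.
-/

open Finset

lemma neg_sq_div_four_le_sq_sub_mul (x c : ℝ) : -(c ^ 2 / 4) ≤ x ^ 2 - c * x := by
  nlinarith [sq_nonneg (x - c / 2)]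

lemma Finset.mul_le_of_sum_mul_le {ι R : Type*} [CommRing R] [PartialOrder R] [IsOrderedRing R]
    {s : Finset ι} {w b : ι → R} {A L : R} (hL : 0 ≤ L) (hw : ∀ m ∈ s, -L ≤ w m)
    (hb : ∀ m ∈ s, 0 ≤ b m) (hb1 : ∑ m ∈ s, b m ≤ 1) (h : ∑ m ∈ s, w m * b m ≤ A)
    {n : ι} (hn : n ∈ s) : w n * b n ≤ A + L := by
  classical
  have hrest : ∑ m ∈ s.erase n, b m ≤ 1 :=
    (sum_le_sum_of_subset_of_nonneg (erase_subset n s) fun m hm _ => hb m hm).trans hb1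
  have htail : -L ≤ ∑ m ∈ s.erase n, w m * b m :=
    calc -L ≤ -L * ∑ m ∈ s.erase n, b m := by
          rw [neg_mul]; exact neg_le_neg (mul_le_of_le_one_right hL hrest)
      _ = ∑ m ∈ s.erase n, -L * b m := mul_sum _ _ _
      _ ≤ ∑ m ∈ s.erase n, w m * b m := sum_le_sum fun m hm =>
          mul_le_mul_of_nonneg_right (hw m (mem_of_mem_erase hm)) (hb m (mem_of_mem_erase hm))
  have := add_sum_erase s (fun m => w m * b m) hn
  linear_combination h + htail + this

lemma le_div_of_sq_sub_mul_mul_sq_le {C Cinv x a : ℝ} (hC : 0 ≤ C) (hx : 0 < x)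
    (ha : 0 ≤ a) (ha1 : a ≤ 1)
    (h : (x ^ 2 - C * Cinv ^ 2 * x) * a ^ 2 ≤ C * Cinv ^ 4 + (C * Cinv ^ 2) ^ 2 / 4) :
    a ≤ (1 + 2 * C) * Cinv ^ 2 / x := by
  rw [le_div_iff₀ hx]
  rcases le_or_gt (2 * C * Cinv ^ 2) x with hlarge | hsmall
  · have hweight : x ^ 2 / 2 ≤ x ^ 2 - C * Cinv ^ 2 * x := by nlinarith
    have hsq : (a * x) ^ 2 ≤ ((1 + 2 * C) * Cinv ^ 2) ^ 2 :=
      calc (a * x) ^ 2 ≤ 2 * ((x ^ 2 - C * Cinv ^ 2 * x) * a ^ 2) := by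
            nlinarith [mul_le_mul_of_nonneg_right hweight (sq_nonneg a)]
        _ ≤ (2 * C + C ^ 2 / 2) * (Cinv ^ 2) ^ 2 := by linarith
        _ ≤ ((1 + 2 * C) * Cinv ^ 2) ^ 2 := by nlinarith [sq_nonneg (Cinv ^ 2), sq_nonneg C]
    exact (pow_le_pow_iff_left₀ (by positivity) (by positivity) two_ne_zero).mp hsq
  · nlinarith [sq_nonneg Cinv]

/-- Combinatorial core of the localization theorem (Theorem `localization`):
the derived weighted inequality forces quadratic decay of the coefficients. -/
theorem stmt_10 :
    ∀ C : ℝ, 0 < C → ∃ C' : ℝ, 0 < C' ∧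
      ∀ (K : ℕ) (Cinv : ℝ), 0 < Cinv →
        ∀ a : ℤ → ℝ, (∀ n, 0 ≤ a n) →
          (∑ n ∈ Finset.Icc (-(K : ℤ)) K,
              ((n : ℝ) ^ 4 - C * Cinv ^ 2 * (n : ℝ) ^ 2) * (a n) ^ 2 ≤ C * Cinv ^ 4) →
          (∑ n ∈ Finset.Icc (-(K : ℤ)) K, (a n) ^ 2 ≤ 1) →
          ∀ n : ℤ, 1 < |n| → |n| ≤ (K : ℤ) → a n ≤ C' * Cinv ^ 2 / (n : ℝ) ^ 2 := by
  intro C hC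
  refine ⟨1 + 2 * C, by positivity, fun K Cinv _ a ha hweighted hnorm n hn hnK => ?_⟩
  have hmem : n ∈ Icc (-(K : ℤ)) K := mem_Icc.mpr (abs_le.mp hnK)
  have hsq_le : a n ^ 2 ≤ 1 :=
    (single_le_sum (f := fun m => a m ^ 2) (fun m _ => sq_nonneg (a m)) hmem).trans hnorm
  have hsingle := mul_le_of_sum_mul_le (L := (C * Cinv ^ 2) ^ 2 / 4) (by positivity)
    (fun (m : ℤ) _ =>
      (neg_sq_div_four_le_sq_sub_mul ((m : ℝ) ^ 2) (C * Cinv ^ 2)).trans_eq (by ring))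
    (fun m _ => sq_nonneg (a m)) hnorm hweighted hmem
  have hn_ne : (n : ℝ) ≠ 0 := by exact_mod_cast (abs_pos.mp (one_pos.trans hn))
  exact le_div_of_sq_sub_mul_mul_sq_le hC.le (by positivity) (ha n)
    ((sq_le_one_iff₀ (ha n)).mp hsq_le) ((by ring : _ = _).trans_le hsingle)
end
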